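/- Action of a homogeneous paradifferential operator on Sobolev spaces (Fourier-coefficient form): Let m ∈ ℝ, μ ≥ 0, and s0, s ∈ ℝ with s0 > μ + 1/2. Fix δ ∈ (0, 1/4] and a function χ : ℝ → ℝ with 0 ≤ χ ≤ 1 and χ(x) = 0 whenever |x| ≥ 1.9. Let C₀ > 0 and, for each n ∈ ℤ \ {0}, let a_n : ℝ → ℂ satisfy |a_n(ξ)| ≤ C₀·|n|^μ·⟨ξ⟩^m for all ξ ∈ ℝ. Then there exists a constant C > 0, depending only on s, s0, m, μ, δ, C₀, such that for all sequences u, v : ℤ → ℂ with ‖u‖_{s0} < ∞ and ‖v‖_s < ∞, the sequence w : ℤ → ℂ defined by w_j := Σ_{k ∈ ℤ, k ≠ j} χ((j−k)/(δ·⟨j+k⟩))·a_{j−k}((j+k)/2)·u_{j−k}·v_k (for each j this sum has only finitely many nonzero terms) satisfies ‖w‖_{s−m} ≤ C·‖u‖_{s0}·‖v‖_s. -/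

import Mathlib

/-- The `H^s` Sobolev norm of a sequence of Fourier coefficients. -/
noncomputable def Hnorm (s : ℝ) (u : ℤ → ℂ) : ℝ :=
  Real.sqrt (∑' j : ℤ, (max 1 |(j : ℝ)|) ^ (2 * s) * ‖u j‖ ^ 2)

/-- Finiteness of the `H^s` Sobolev norm of a sequence of Fourier coefficients. -/
def HSummable (s : ℝ) (u : ℤ → ℂ) : Prop :=
  Summable fun j : ℤ => (max 1 |(j : ℝ)|) ^ (2 * s) * ‖u j‖ ^ 2

/-- The Fourier coefficients of the Bony-Weyl paradifferential operator with homogeneous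
symbol `a(u;x,ξ) = ∑_{n ≠ 0} a_n(ξ) u_n e^{inx}` applied to `v`, with cut-off `χ(·/δ·)`. -/
noncomputable def paraW (δ : ℝ) (χ : ℝ → ℝ) (a : ℤ → ℝ → ℂ) (u v : ℤ → ℂ) (j : ℤ) : ℂ :=
  ∑' k : ℤ, if k = j then 0 else
    (χ (((j : ℝ) - (k : ℝ)) / (δ * max 1 |(j : ℝ) + (k : ℝ)|)) : ℂ) *
      a (j - k) (((j : ℝ) + (k : ℝ)) / 2) * u (j - k) * v k

/-!
On the support of the cut-off, `|j - k| < 1.9 δ ⟨j + k⟩ ≤ ⟨j + k⟩ / 2`, so the frequencies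
`j`, `k` and `(j + k) / 2` have comparable brackets. Hence the `(j, k)` entry of the operator,
weighted by `⟨j⟩^(s-m)`, is bounded by `C ⟨j - k⟩^μ |u_{j-k}| ⟨k⟩^s |v_k|`, and the weighted
output is dominated by the convolution of `(⟨n⟩^μ |u_n|)` with `(⟨k⟩^s |v_k|)`. Young's
inequality `ℓ¹ * ℓ² ⊆ ℓ²` and the Cauchy–Schwarz bound
`∑ ⟨n⟩^μ |u_n| ≤ (∑ ⟨n⟩^(2(μ - s0)))^(1/2) ‖u‖_{s0}`, finite because `s0 > μ + 1/2`,
give the estimate.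
-/

open ENNReal MeasureTheory

namespace ENNReal

variable {ι : Type*}

theorem sq_tsum_mul_le (f g : ι → ℝ≥0∞) :
    (∑' i, f i * g i) ^ 2 ≤ (∑' i, f i ^ 2) * ∑' i, g i ^ 2 := by
  -- Hölder's inequality for the counting measure, with every subset of `ι` measurable.
  let _ : MeasurableSpace ι := ⊤
  have h := ENNReal.lintegral_mul_le_Lp_mul_Lq Measure.count Real.HolderConjugate.two_two
    (measurable_from_top (f := f)).aemeasurable (measurable_from_top (f := g)).aemeasurable
  simp only [Pi.mul_apply, lintegral_count, ENNReal.rpow_two] at h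
  calc (∑' i, f i * g i) ^ 2
      ≤ ((∑' i, f i ^ 2) ^ (1 / 2 : ℝ) * (∑' i, g i ^ 2) ^ (1 / 2 : ℝ)) ^ 2 := by gcongr
    _ = (∑' i, f i ^ 2) * ∑' i, g i ^ 2 := by
      simp only [mul_pow, ← ENNReal.rpow_natCast, ← ENNReal.rpow_mul]
      norm_num

theorem sq_tsum_mul_le_weighted (w f : ι → ℝ≥0∞) :
    (∑' i, w i * f i) ^ 2 ≤ (∑' i, w i) * ∑' i, w i * f i ^ 2 := by
  have hw : ∀ i, (w i ^ (2⁻¹ : ℝ)) ^ 2 = w i := fun i => by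
    simpa using rpow_inv_natCast_pow two_ne_zero (w i)
  have := sq_tsum_mul_le (fun i => w i ^ (2⁻¹ : ℝ)) (fun i => w i ^ (2⁻¹ : ℝ) * f i)
  simpa only [← mul_assoc, ← sq, mul_pow, hw] using this

theorem tsum_sq_convolution_le {G : Type*} [AddGroup G] (f g : G → ℝ≥0∞) :
    ∑' j, (∑' k, f (j - k) * g k) ^ 2 ≤ (∑' n, f n) ^ 2 * ∑' k, g k ^ 2 := by
  have hleft (j : G) : ∑' k, f (j - k) = ∑' n, f n := (Equiv.subLeft j).tsum_eq f
  have hright (k : G) : ∑' j, f (j - k) = ∑' n, f n := (Equiv.subRight k).tsum_eq f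
  calc ∑' j, (∑' k, f (j - k) * g k) ^ 2
      ≤ ∑' j, (∑' n, f n) * ∑' k, f (j - k) * g k ^ 2 := by
        gcongr with j
        simpa only [hleft] using sq_tsum_mul_le_weighted (fun k => f (j - k)) g
    _ = (∑' n, f n) * ∑' k, (∑' j, f (j - k)) * g k ^ 2 := by
        rw [ENNReal.tsum_mul_left, ENNReal.tsum_comm]
        simp only [ENNReal.tsum_mul_right]
    _ = (∑' n, f n) ^ 2 * ∑' k, g k ^ 2 := by
        simp only [hright, ENNReal.tsum_mul_left, sq, mul_assoc]

end ENNReal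

theorem Real.rpow_le_rpow_abs_mul_rpow {x y c : ℝ} (hx : 0 < x) (hy : 0 < y)
    (hxy : x ≤ c * y) (hyx : y ≤ c * x) (t : ℝ) : x ^ t ≤ c ^ |t| * y ^ t := by
  have hc : 0 < c := pos_of_mul_pos_left (hx.trans_le hxy) hy.le
  rcases le_or_gt 0 t with ht | ht
  · calc x ^ t ≤ (c * y) ^ t := Real.rpow_le_rpow hx.le hxy ht
      _ = c ^ |t| * y ^ t := by rw [abs_of_nonneg ht, Real.mul_rpow hc.le hy.le]
  · calc x ^ t ≤ (y / c) ^ t :=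
          Real.rpow_le_rpow_of_nonpos (by positivity) ((div_le_iff₀' hc).mpr hyx) ht.le
      _ = c ^ |t| * y ^ t := by
          rw [abs_of_neg ht, Real.div_rpow hy.le hc.le, Real.rpow_neg hc.le, div_eq_inv_mul]

theorem max_one_abs_le_of_abs_sub_le {x y : ℝ} (h : |x - y| ≤ max 1 |x + y| / 2) :
    max 1 |x| ≤ max 1 |x + y| ∧ max 1 |x + y| ≤ 4 * max 1 |x| := by
  have h1 : 1 ≤ max 1 |x + y| := le_max_left _ _
  have hsum : |x + y| ≤ max 1 |x + y| := le_max_right _ _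
  have hx : |x| ≤ max 1 |x| := le_max_right _ _
  have htwo : |2 * x| ≤ |x + y| + |x - y| := by
    simpa [← two_mul, add_add_sub_cancel] using abs_add_le (x + y) (x - y)
  have hsum' : |x + y| ≤ 2 * |x| + |x - y| := by
    have := abs_sub (2 * x) (x - y)
    rwa [show 2 * x - (x - y) = x + y by ring, abs_mul, abs_two] at this
  rw [abs_mul, abs_two] at htwo
  constructor
  · exact max_le h1 (by linarith)
  · have : max 1 |x + y| ≤ 2 * max 1 |x| + max 1 |x + y| / 2 :=
      max_le (by linarith [le_max_left 1 |x|]) (by linarith)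
    linarith

theorem max_one_abs_half_le (z : ℝ) :
    max 1 |z / 2| ≤ max 1 |z| ∧ max 1 |z| ≤ 2 * max 1 |z / 2| := by
  have hz : |z / 2| = |z| / 2 := by rw [abs_div, abs_two]
  rw [hz]
  constructor
  · exact max_le_max le_rfl (by linarith [abs_nonneg z])
  · exact max_le (by linarith [le_max_left 1 (|z| / 2)]) (by linarith [le_max_right 1 (|z| / 2)])

theorem rpow_mul_rpow_le_of_abs_sub_le {x y : ℝ} (h : |x - y| ≤ max 1 |x + y| / 2) (s m : ℝ) :
    max 1 |x| ^ (s - m) * max 1 |(x + y) / 2| ^ m ≤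
      4 ^ |s - m| * 4 ^ |m| * max 1 |y| ^ s := by
  obtain ⟨hxP, hPx⟩ := max_one_abs_le_of_abs_sub_le h
  obtain ⟨hyP, hPy⟩ := max_one_abs_le_of_abs_sub_le (x := y) (y := x)
    (by rwa [abs_sub_comm, add_comm])
  rw [add_comm y x] at hyP hPy
  obtain ⟨hMP, hPM⟩ := max_one_abs_half_le (x + y)
  have pos (z : ℝ) : 0 < max 1 |z| := lt_max_of_lt_left one_pos
  have hxy := Real.rpow_le_rpow_abs_mul_rpow (c := 4) (pos x) (pos y)
    (by linarith) (by linarith) (s - m)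
  have hmy := Real.rpow_le_rpow_abs_mul_rpow (c := 4) (pos ((x + y) / 2)) (pos y)
    (by linarith) (by linarith) m
  calc max 1 |x| ^ (s - m) * max 1 |(x + y) / 2| ^ m
      ≤ (4 ^ |s - m| * max 1 |y| ^ (s - m)) * (4 ^ |m| * max 1 |y| ^ m) := by
        gcongr
    _ = 4 ^ |s - m| * 4 ^ |m| * max 1 |y| ^ s := by
        rw [mul_mul_mul_comm, ← Real.rpow_add (pos y), sub_add_cancel]

theorem summable_max_one_abs_rpow {t : ℝ} (ht : t < -1) :
    Summable fun n : ℤ => max 1 |(n : ℝ)| ^ t := by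
  have habs : Summable fun n : ℤ => |(n : ℝ)| ^ t := by
    simpa using Real.summable_abs_int_rpow (b := -t) (by linarith)
  refine (habs.update 0 1).congr fun n => ?_
  rcases eq_or_ne n 0 with rfl | hn
  · simp
  · have : 1 ≤ |(n : ℝ)| := by exact_mod_cast Int.one_le_abs hn
    simp [hn, max_eq_right this]

theorem max_one_abs_intCast_of_ne_zero {n : ℤ} (hn : n ≠ 0) : max 1 |(n : ℝ)| = |(n : ℝ)| :=
  max_eq_right (by exact_mod_cast Int.one_le_abs hn)

theorem abs_sub_le_half_of_abs_div_lt {d P δ : ℝ} (hP : 0 < P) (hδ0 : 0 < δ) (hδ1 : δ ≤ 1 / 4)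
    (h : |d / (δ * P)| < 1.9) : |d| ≤ P / 2 := by
  have hδP : 0 < δ * P := mul_pos hδ0 hP
  rw [abs_div, abs_of_pos hδP, div_lt_iff₀ hδP] at h
  nlinarith

noncomputable def paraKernel (δ : ℝ) (χ : ℝ → ℝ) (a : ℤ → ℝ → ℂ) (u v : ℤ → ℂ) (j k : ℤ) : ℂ :=
  if k = j then 0 else
    (χ (((j : ℝ) - (k : ℝ)) / (δ * max 1 |(j : ℝ) + (k : ℝ)|)) : ℂ) *
      a (j - k) (((j : ℝ) + (k : ℝ)) / 2) * u (j - k) * v k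

theorem paraW_eq_tsum_paraKernel (δ : ℝ) (χ : ℝ → ℝ) (a : ℤ → ℝ → ℂ) (u v : ℤ → ℂ) (j : ℤ) :
    paraW δ χ a u v j = ∑' k, paraKernel δ χ a u v j k := rfl

-- `⟨n⟩^s |u_n|`, valued in `ℝ≥0∞` so that sums of such terms need no summability hypotheses.
noncomputable def weightedCoeff (s : ℝ) (u : ℤ → ℂ) (n : ℤ) : ℝ≥0∞ :=
  ENNReal.ofReal (max 1 |(n : ℝ)| ^ s * ‖u n‖)

theorem weightedCoeff_sq (s : ℝ) (u : ℤ → ℂ) (n : ℤ) :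
    weightedCoeff s u n ^ 2 = ENNReal.ofReal (max 1 |(n : ℝ)| ^ (2 * s) * ‖u n‖ ^ 2) := by
  rw [weightedCoeff, ← ENNReal.ofReal_pow (by positivity), mul_pow, mul_comm 2 s,
    Real.rpow_mul (lt_max_of_lt_left one_pos).le, Real.rpow_two]

theorem tsum_weightedCoeff_sq {s : ℝ} {u : ℤ → ℂ} (hu : HSummable s u) :
    ∑' n, weightedCoeff s u n ^ 2 = ENNReal.ofReal (Hnorm s u ^ 2) := by
  rw [Hnorm, Real.sq_sqrt (tsum_nonneg fun n => by positivity),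
    ENNReal.ofReal_tsum_of_nonneg (fun n => by positivity) hu]
  simp only [weightedCoeff_sq]

theorem hSummable_and_Hnorm_le_of_tsum_sq_le {s R : ℝ} {w : ℤ → ℂ} (hR : 0 ≤ R)
    (h : ∑' n, weightedCoeff s w n ^ 2 ≤ ENNReal.ofReal (R ^ 2)) :
    HSummable s w ∧ Hnorm s w ≤ R := by
  simp only [weightedCoeff_sq] at h
  have hw : HSummable s w := by
    refine (ENNReal.summable_toReal (ne_top_of_le_ne_top ofReal_ne_top h)).congr fun n => ?_
    exact ENNReal.toReal_ofReal (by positivity)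
  refine ⟨hw, ?_⟩
  rw [← ENNReal.ofReal_tsum_of_nonneg (fun n => by positivity) hw,
    ENNReal.ofReal_le_ofReal_iff (by positivity)] at h
  exact (Real.sqrt_le_sqrt h).trans_eq (Real.sqrt_sq hR)

theorem sq_tsum_weightedCoeff_le {μ s0 : ℝ} (hs0 : μ + 1 / 2 < s0) {u : ℤ → ℂ}
    (hu : HSummable s0 u) :
    (∑' n, weightedCoeff μ u n) ^ 2 ≤
      ENNReal.ofReal ((∑' n : ℤ, max 1 |(n : ℝ)| ^ (2 * (μ - s0))) * Hnorm s0 u ^ 2) := by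
  have hsplit (n : ℤ) : weightedCoeff μ u n =
      ENNReal.ofReal (max 1 |(n : ℝ)| ^ (μ - s0)) * weightedCoeff s0 u n := by
    rw [weightedCoeff, weightedCoeff, ← ENNReal.ofReal_mul (by positivity), ← mul_assoc,
      ← Real.rpow_add (lt_max_of_lt_left one_pos), sub_add_cancel]
  have hweight (n : ℤ) : ENNReal.ofReal (max 1 |(n : ℝ)| ^ (μ - s0)) ^ 2 =
      ENNReal.ofReal (max 1 |(n : ℝ)| ^ (2 * (μ - s0))) := by
    rw [← ENNReal.ofReal_pow (by positivity), mul_comm 2,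
      Real.rpow_mul (lt_max_of_lt_left one_pos).le, Real.rpow_two]
  calc (∑' n, weightedCoeff μ u n) ^ 2
      ≤ (∑' n : ℤ, ENNReal.ofReal (max 1 |(n : ℝ)| ^ (μ - s0)) ^ 2) *
          ∑' n, weightedCoeff s0 u n ^ 2 := by
        simpa only [hsplit] using ENNReal.sq_tsum_mul_le _ _
    _ = _ := by
        rw [tsum_weightedCoeff_sq hu, ENNReal.ofReal_mul (tsum_nonneg fun n => by positivity),
          ENNReal.ofReal_tsum_of_nonneg (fun n => by positivity)
            (summable_max_one_abs_rpow (by linarith))]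
        simp only [hweight]

section Kernel

variable {m μ s δ C₀ : ℝ} {χ : ℝ → ℝ} {a : ℤ → ℝ → ℂ}

theorem norm_paraKernel_le (hδ0 : 0 < δ) (hδ1 : δ ≤ 1 / 4)
    (hC₀ : 0 ≤ C₀) (hχ0 : ∀ x, 0 ≤ χ x) (hχ1 : ∀ x, χ x ≤ 1)
    (hχs : ∀ x, (1.9 : ℝ) ≤ |x| → χ x = 0)
    (ha : ∀ n : ℤ, n ≠ 0 → ∀ ξ : ℝ, ‖a n ξ‖ ≤ C₀ * |(n : ℝ)| ^ μ * max 1 |ξ| ^ m)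
    (u v : ℤ → ℂ) (j k : ℤ) :
    max 1 |(j : ℝ)| ^ (s - m) * ‖paraKernel δ χ a u v j k‖ ≤
      C₀ * 4 ^ |s - m| * 4 ^ |m| * (max 1 |((j - k : ℤ) : ℝ)| ^ μ * ‖u (j - k)‖) *
        (max 1 |(k : ℝ)| ^ s * ‖v k‖) := by
  unfold paraKernel
  split_ifs with hkj
  · simp only [norm_zero, mul_zero]
    positivity
  set x := ((j : ℝ) - k) / (δ * max 1 |(j : ℝ) + k|)
  by_cases hx : χ x = 0
  · simp only [hx, Complex.ofReal_zero, zero_mul, norm_zero, mul_zero]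
    positivity
  have hjk : |(j : ℝ) - k| ≤ max 1 |(j : ℝ) + k| / 2 :=
    abs_sub_le_half_of_abs_div_lt (lt_max_of_lt_left one_pos) hδ0 hδ1
      (lt_of_not_ge fun h => hx (hχs x h))
  have hn : j - k ≠ 0 := sub_ne_zero.mpr (Ne.symm hkj)
  have hsymbol := ha (j - k) hn (((j : ℝ) + k) / 2)
  rw [← max_one_abs_intCast_of_ne_zero hn] at hsymbol
  have hχx : ‖(χ x : ℂ)‖ ≤ 1 := by
    rw [Complex.norm_real, Real.norm_of_nonneg (hχ0 x)]
    exact hχ1 x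
  have hweights := rpow_mul_rpow_le_of_abs_sub_le hjk s m
  calc max 1 |(j : ℝ)| ^ (s - m) * ‖(χ x : ℂ) * a (j - k) (((j : ℝ) + k) / 2) * u (j - k) * v k‖
      ≤ max 1 |(j : ℝ)| ^ (s - m) * (1 * (C₀ * max 1 |((j - k : ℤ) : ℝ)| ^ μ *
          max 1 |((j : ℝ) + k) / 2| ^ m) * ‖u (j - k)‖ * ‖v k‖) := by
        simp only [norm_mul]
        gcongr
    _ = C₀ * (max 1 |(j : ℝ)| ^ (s - m) * max 1 |((j : ℝ) + k) / 2| ^ m) *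
          (max 1 |((j - k : ℤ) : ℝ)| ^ μ * ‖u (j - k)‖) * ‖v k‖ := by ring
    _ ≤ C₀ * (4 ^ |s - m| * 4 ^ |m| * max 1 |(k : ℝ)| ^ s) *
          (max 1 |((j - k : ℤ) : ℝ)| ^ μ * ‖u (j - k)‖) * ‖v k‖ := by gcongr
    _ = _ := by ring

theorem weightedCoeff_paraW_le (hδ0 : 0 < δ) (hδ1 : δ ≤ 1 / 4)
    (hC₀ : 0 ≤ C₀) (hχ0 : ∀ x, 0 ≤ χ x) (hχ1 : ∀ x, χ x ≤ 1)
    (hχs : ∀ x, (1.9 : ℝ) ≤ |x| → χ x = 0)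
    (ha : ∀ n : ℤ, n ≠ 0 → ∀ ξ : ℝ, ‖a n ξ‖ ≤ C₀ * |(n : ℝ)| ^ μ * max 1 |ξ| ^ m)
    (u v : ℤ → ℂ) (j : ℤ) :
    weightedCoeff (s - m) (paraW δ χ a u v) j ≤ ENNReal.ofReal (C₀ * 4 ^ |s - m| * 4 ^ |m|) *
      ∑' k, weightedCoeff μ u (j - k) * weightedCoeff s v k := by
  calc weightedCoeff (s - m) (paraW δ χ a u v) j
      = ENNReal.ofReal (max 1 |(j : ℝ)| ^ (s - m)) * ‖∑' k, paraKernel δ χ a u v j k‖ₑ := by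
        rw [weightedCoeff, ENNReal.ofReal_mul (by positivity), ofReal_norm,
          paraW_eq_tsum_paraKernel]
    _ ≤ ∑' k, ENNReal.ofReal (max 1 |(j : ℝ)| ^ (s - m) * ‖paraKernel δ χ a u v j k‖) := by
        simp only [ENNReal.ofReal_mul (by positivity : (0:ℝ) ≤ max 1 |(j : ℝ)| ^ (s - m)),
          ofReal_norm, ENNReal.tsum_mul_left]
        gcongr
        exact enorm_tsum_le_tsum_enorm
    _ ≤ ∑' k, ENNReal.ofReal (C₀ * 4 ^ |s - m| * 4 ^ |m|) *
          (weightedCoeff μ u (j - k) * weightedCoeff s v k) := by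
        gcongr with k
        rw [weightedCoeff, weightedCoeff, ← ENNReal.ofReal_mul (by positivity),
          ← ENNReal.ofReal_mul (by positivity), ← mul_assoc]
        exact ENNReal.ofReal_le_ofReal (norm_paraKernel_le hδ0 hδ1 hC₀ hχ0 hχ1 hχs ha u v j k)
    _ = _ := ENNReal.tsum_mul_left

end Kernel

theorem paradifferential_action_homogeneous_general (m μ s0 s : ℝ)
    (hs0 : μ + 1 / 2 < s0) (δ : ℝ) (hδ0 : 0 < δ) (hδ1 : δ ≤ 1 / 4)
    (C₀ : ℝ) (hC₀ : 0 < C₀) :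
    ∃ C : ℝ, 0 < C ∧
      ∀ χ : ℝ → ℝ, (∀ x : ℝ, 0 ≤ χ x) → (∀ x : ℝ, χ x ≤ 1) →
        (∀ x : ℝ, (1.9 : ℝ) ≤ |x| → χ x = 0) →
      ∀ a : ℤ → ℝ → ℂ,
        (∀ n : ℤ, n ≠ 0 → ∀ ξ : ℝ,
          ‖a n ξ‖ ≤ C₀ * |(n : ℝ)| ^ μ * (max 1 |ξ|) ^ m) →
      ∀ u v : ℤ → ℂ, HSummable s0 u → HSummable s v →
        HSummable (s - m) (paraW δ χ a u v) ∧
          Hnorm (s - m) (paraW δ χ a u v) ≤ C * Hnorm s0 u * Hnorm s v := by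
  set K := ∑' n : ℤ, max 1 |(n : ℝ)| ^ (2 * (μ - s0))
  have hK : 0 < K := (summable_max_one_abs_rpow (by linarith)).tsum_pos
    (fun n => by positivity) 0 (by simp)
  have hC₁ : 0 < C₀ * 4 ^ |s - m| * 4 ^ |m| := by positivity
  set C₁ := C₀ * 4 ^ |s - m| * 4 ^ |m|
  refine ⟨C₁ * √K, by positivity, fun χ hχ0 hχ1 hχs a ha u v hu hv => ?_⟩
  have hu0 : 0 ≤ Hnorm s0 u := Real.sqrt_nonneg _
  have hv0 : 0 ≤ Hnorm s v := Real.sqrt_nonneg _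
  refine hSummable_and_Hnorm_le_of_tsum_sq_le (by positivity) ?_
  calc ∑' j, weightedCoeff (s - m) (paraW δ χ a u v) j ^ 2
      ≤ ∑' j, (ENNReal.ofReal C₁ * ∑' k, weightedCoeff μ u (j - k) * weightedCoeff s v k) ^ 2 := by
        gcongr with j
        exact weightedCoeff_paraW_le hδ0 hδ1 hC₀.le hχ0 hχ1 hχs ha u v j
    _ ≤ ENNReal.ofReal C₁ ^ 2 *
          ((∑' n, weightedCoeff μ u n) ^ 2 * ∑' k, weightedCoeff s v k ^ 2) := by
        simp only [mul_pow, ENNReal.tsum_mul_left]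
        gcongr
        exact ENNReal.tsum_sq_convolution_le _ _
    _ ≤ ENNReal.ofReal C₁ ^ 2 *
          (ENNReal.ofReal (K * Hnorm s0 u ^ 2) * ENNReal.ofReal (Hnorm s v ^ 2)) := by
        rw [tsum_weightedCoeff_sq hv]
        gcongr
        exact sq_tsum_weightedCoeff_le hs0 hu
    _ = ENNReal.ofReal ((C₁ * √K * Hnorm s0 u * Hnorm s v) ^ 2) := by
        rw [← ENNReal.ofReal_pow hC₁.le, ← ENNReal.ofReal_mul (by positivity),
          ← ENNReal.ofReal_mul (by positivity)]
        congr 1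
        linear_combination (C₁ ^ 2 * Hnorm s0 u ^ 2 * Hnorm s v ^ 2) * (Real.sq_sqrt hK.le).symm

/-- Action of a homogeneous paradifferential operator on Sobolev spaces
(Fourier-coefficient form): `‖Op^{BW}(a(u;·))v‖_{s-m} ≤ C ‖u‖_{s0} ‖v‖_s`. -/
theorem paradifferential_action_homogeneous (m μ s0 s : ℝ) (hμ : 0 ≤ μ)
    (hs0 : μ + 1 / 2 < s0) (δ : ℝ) (hδ0 : 0 < δ) (hδ1 : δ ≤ 1 / 4)
    (C₀ : ℝ) (hC₀ : 0 < C₀) :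
    ∃ C : ℝ, 0 < C ∧
      ∀ χ : ℝ → ℝ, (∀ x : ℝ, 0 ≤ χ x) → (∀ x : ℝ, χ x ≤ 1) →
        (∀ x : ℝ, (1.9 : ℝ) ≤ |x| → χ x = 0) →
      ∀ a : ℤ → ℝ → ℂ,
        (∀ n : ℤ, n ≠ 0 → ∀ ξ : ℝ,
          ‖a n ξ‖ ≤ C₀ * |(n : ℝ)| ^ μ * (max 1 |ξ|) ^ m) →
      ∀ u v : ℤ → ℂ, HSummable s0 u → HSummable s v →
        HSummable (s - m) (paraW δ χ a u v) ∧
          Hnorm (s - m) (paraW δ χ a u v) ≤ C * Hnorm s0 u * Hnorm s v :=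
  paradifferential_action_homogeneous_general m μ s0 s hs0 δ hδ0 hδ1 C₀ hC₀
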